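/- arXiv:math/9811034 — 7 statements merged into one kernel-verified Lean document; each statement's English description precedes it below -/
import Mathlib

section
/- Let U be a bialgebra with counit ε and comultiplication Δ (Sweedler notation Δx = x₍₁₎ ⊗ x₍₂₎), and let C be a unital algebra which is a left U-module via ξ satisfying ξ_x(1) = ε(x)·1 and the Leibniz rule ξ_x(fg) = ξ_{x₍₁₎}(f)·ξ_{x₍₂₎}(g) (i.e., C is a U-module algebra). Suppose φ : U → C is a linear map with φ(1) = 1 and φ(xy) = (ξ_{x₍₁₎}·φ(y))·φ(x₍₂₎) for all x,y ∈ U. Then the prescription x · f := (ξ_{x₍₁₎}·f)·φ(x₍₂₎) defines a left U-module structure on C, i.e., 1 · f = f and x · (y · f) = (xy) · f for all x,y ∈ U and f ∈ C. -/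
/-!
Write `A ⋆ B := sw A B`; it is the convolution product, hence associative by coassociativity of
`Δ`. Put `ρ_f := actOn ξ f`. Expanding `y · f` as `∑ ξ_{y₍₁₎} f * φ(y₍₂₎)`, the Leibniz rule
writes `x · (y · f)` as `∑ ((ρ_{ξ_{y₍₁₎} f} ⋆ ρ_{φ(y₍₂₎)}) ⋆ φ)(x)`, while multiplicativity of `Δ`
writes `(xy) · f` as `∑ ((ρ_f ∘ (· * y₍₁₎)) ⋆ (φ ∘ (· * y₍₂₎)))(x)`. After reassociating, the two
sums agree term by term: `ρ_f ∘ (· * y₍₁₎) = ρ_{ξ_{y₍₁₎} f}` because `ξ` is multiplicative, and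
`φ ∘ (· * y₍₂₎) = ρ_{φ(y₍₂₎)} ⋆ φ` is the twisted multiplicativity of `φ`.
-/

open TensorProduct

/-- The "Sweedler" map `x ↦ A(x₍₁₎) * B(x₍₂₎)`. -/
noncomputable def sw {R U C : Type*} [CommRing R] [Ring U] [Bialgebra R U]
    [Ring C] [Algebra R C] (A B : U →ₗ[R] C) : U →ₗ[R] C :=
  LinearMap.mul' R C ∘ₗ TensorProduct.map A B ∘ₗ Coalgebra.comul

/-- `actOn ξ f : x ↦ ξ_x · f`. -/
noncomputable def actOn {R U C : Type*} [CommRing R] [Ring U] [Algebra R U]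
    [Ring C] [Algebra R C] (ξ : U →ₗ[R] Module.End R C) (f : C) : U →ₗ[R] C :=
  LinearMap.applyₗ f ∘ₗ ξ

open WithConv Coalgebra LinearMap

section Sweedler

variable {R U C : Type*} [CommRing R] [Ring U] [Bialgebra R U] [Ring C] [Algebra R C]

lemma sw_eq_ofConv_convMul (A B : U →ₗ[R] C) : sw A B = (toConv A * toConv B).ofConv := rfl

lemma sw_apply_eq_sum (A B : U →ₗ[R] C) {ι : Type*} {x : U} (r : Repr R x ι) :
    sw A B x = ∑ i ∈ r.index, A (r.left i) * B (r.right i) :=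
  r.convMul_apply (toConv A) (toConv B)

lemma sw_assoc (A B D : U →ₗ[R] C) : sw (sw A B) D = sw A (sw B D) :=
  congrArg ofConv (mul_assoc (toConv A) (toConv B) (toConv D))

lemma sw_sum_left {ι : Type*} (s : Finset ι) (A : ι → U →ₗ[R] C) (B : U →ₗ[R] C) :
    sw (∑ i ∈ s, A i) B = ∑ i ∈ s, sw (A i) B := by
  simp only [sw_eq_ofConv_convMul, toConv_sum, Finset.sum_mul, ofConv_sum]

lemma sw_apply_one (A B : U →ₗ[R] C) : sw A B 1 = A 1 * B 1 := by
  simp [sw, Algebra.TensorProduct.one_def]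

lemma sw_apply_mul (A B : U →ₗ[R] C) (x : U) {ι : Type*} {y : U} (r : Repr R y ι) :
    sw A B (x * y) =
      ∑ i ∈ r.index, sw (A ∘ₗ mulRight R (r.left i)) (B ∘ₗ mulRight R (r.right i)) x := by
  simp only [sw, comp_apply, Bialgebra.comul_mul, ← r.eq, Finset.mul_sum, map_sum]
  refine Finset.sum_congr rfl fun i _ => ?_
  rw [← mulRight_apply (R := R), LinearMap.mulRight_tmul, ← comp_apply (f := map A B), ← map_comp]

end Sweedler

section ModuleAlgebra

variable {R U C : Type*} [CommRing R] [Ring U] [Algebra R U] [Ring C] [Algebra R C]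
  (ξ : U →ₗ[R] Module.End R C)

lemma actOn_apply (f : C) (x : U) : actOn ξ f x = ξ x f := rfl

lemma actOn_sum {ι : Type*} (s : Finset ι) (f : ι → C) :
    actOn ξ (∑ i ∈ s, f i) = ∑ i ∈ s, actOn ξ (f i) := by
  ext x; simp [actOn_apply]

lemma actOn_comp_mulRight (hξmul : ∀ x y : U, ξ (x * y) = ξ x ∘ₗ ξ y) (f : C) (y : U) :
    actOn ξ f ∘ₗ mulRight R y = actOn ξ (ξ y f) := by
  ext x; simp [actOn_apply, hξmul]

end ModuleAlgebra

lemma actOn_mul {R U C : Type*} [CommRing R] [Ring U] [Bialgebra R U] [Ring C] [Algebra R C]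
    {ξ : U →ₗ[R] Module.End R C}
    (hξleib : ∀ (x : U) (f g : C), ξ x (f * g) = sw (actOn ξ f) (actOn ξ g) x) (f g : C) :
    actOn ξ (f * g) = sw (actOn ξ f) (actOn ξ g) :=
  LinearMap.ext fun x => hξleib x f g

theorem prop1_module_structure_general {R U C : Type*} [CommRing R] [Ring U] [Bialgebra R U]
    [Ring C] [Algebra R C]
    (ξ : U →ₗ[R] Module.End R C)
    (hξone : ξ 1 = LinearMap.id)
    (hξmul : ∀ x y : U, ξ (x * y) = ξ x ∘ₗ ξ y)
    (hξleib : ∀ (x : U) (f g : C), ξ x (f * g) = sw (actOn ξ f) (actOn ξ g) x)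
    (φ : U →ₗ[R] C) (hφone : φ 1 = 1)
    (hφ : ∀ x y : U, φ (x * y) = sw (actOn ξ (φ y)) φ x) :
    (∀ f : C, sw (actOn ξ f) φ 1 = f) ∧
    (∀ (x y : U) (f : C),
      sw (actOn ξ (sw (actOn ξ f) φ y)) φ x = sw (actOn ξ f) φ (x * y)) := by
  refine ⟨fun f => by simp [sw_apply_one, actOn_apply, hξone, hφone], fun x y f => ?_⟩
  have hφ_comp_mulRight (z : U) : φ ∘ₗ mulRight R z = sw (actOn ξ (φ z)) φ :=
    LinearMap.ext fun x => hφ x z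
  let r := ℛ R y
  calc sw (actOn ξ (sw (actOn ξ f) φ y)) φ x
      = ∑ i ∈ r.index, sw (sw (actOn ξ (ξ (r.left i) f)) (actOn ξ (φ (r.right i)))) φ x := by
        rw [sw_apply_eq_sum _ _ r, actOn_sum, sw_sum_left, LinearMap.sum_apply]
        simp only [actOn_apply, actOn_mul hξleib]
    _ = ∑ i ∈ r.index, sw (actOn ξ (ξ (r.left i) f)) (sw (actOn ξ (φ (r.right i))) φ) x := by
        simp only [sw_assoc]
    _ = ∑ i ∈ r.index, sw (actOn ξ f ∘ₗ mulRight R (r.left i)) (φ ∘ₗ mulRight R (r.right i)) x := by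
        simp only [actOn_comp_mulRight ξ hξmul, hφ_comp_mulRight]
    _ = sw (actOn ξ f) φ (x * y) := (sw_apply_mul _ _ x r).symm

/-- Proposition 1 (first part): if `φ : U → C` is linear with `φ(1) = 1` and
`φ(xy) = (ξ_{x₍₁₎}·φ(y))·φ(x₍₂₎)`, then `x · f := (ξ_{x₍₁₎}·f)·φ(x₍₂₎)` defines a
left `U`-module structure on `C`. -/
theorem prop1_module_structure {R U C : Type*} [CommRing R] [Ring U] [Bialgebra R U]
    [Ring C] [Algebra R C]
    (ξ : U →ₗ[R] Module.End R C)
    (hξone : ξ 1 = LinearMap.id)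
    (hξmul : ∀ x y : U, ξ (x * y) = ξ x ∘ₗ ξ y)
    (hξunit : ∀ x : U, ξ x 1 = Coalgebra.counit (R := R) x • (1 : C))
    (hξleib : ∀ (x : U) (f g : C), ξ x (f * g) = sw (actOn ξ f) (actOn ξ g) x)
    (φ : U →ₗ[R] C) (hφone : φ 1 = 1)
    (hφ : ∀ x y : U, φ (x * y) = sw (actOn ξ (φ y)) φ x) :
    (∀ f : C, sw (actOn ξ f) φ 1 = f) ∧
    (∀ (x y : U) (f : C),
      sw (actOn ξ (sw (actOn ξ f) φ y)) φ x = sw (actOn ξ f) φ (x * y)) :=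
  prop1_module_structure_general ξ hξone hξmul hξleib φ hφone hφ
end

section
/- Converse of Proposition 1: Let U be a bialgebra and C a unital algebra which is a left U-module algebra via ξ. Suppose x ⊗ f ↦ x·f is a left U-module structure on C satisfying the generalized Leibniz rule x·(fg) = (ξ_{x₍₁₎}·f)·(x₍₂₎·g). Define φ : U → C by φ(x) := x·1. Then φ(1) = 1, φ(xy) = (ξ_{x₍₁₎}·φ(y))·φ(x₍₂₎) for all x,y ∈ U, and x·f = (ξ_{x₍₁₎}·f)·φ(x₍₂₎) for all x ∈ U, f ∈ C. -/
open TensorProduct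

/-- Converse of Proposition 1: a left `U`-module structure `·` on `C` satisfying the
generalized Leibniz rule arises from `φ(x) := x · 1` via the modified-action formula. -/
theorem prop1_converse {R U C : Type*} [CommRing R] [Ring U] [Bialgebra R U]
    [Ring C] [Algebra R C]
    (ξ : U →ₗ[R] Module.End R C)
    (hξone : ξ 1 = LinearMap.id)
    (hξmul : ∀ x y : U, ξ (x * y) = ξ x ∘ₗ ξ y)
    (hξunit : ∀ x : U, ξ x 1 = Coalgebra.counit (R := R) x • (1 : C))
    (hξleib : ∀ (x : U) (f g : C), ξ x (f * g) = sw (actOn ξ f) (actOn ξ g) x)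
    (act : U →ₗ[R] Module.End R C)
    (hactone : act 1 = LinearMap.id)
    (hactmul : ∀ x y : U, act (x * y) = act x ∘ₗ act y)
    (hactleib : ∀ (x : U) (f g : C),
      act x (f * g) = sw (actOn ξ f) (actOn act g) x) :
    (act (1 : U) (1 : C) = 1) ∧
    (∀ x y : U, act (x * y) (1 : C) = sw (actOn ξ (act y 1)) (actOn act (1 : C)) x) ∧
    (∀ (x : U) (f : C), act x f = sw (actOn ξ f) (actOn act (1 : C)) x) := by
  refine ⟨by simp [hactone], ?_, ?_⟩
  · intro x y
    have h := hactleib x (act y 1) 1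
    rw [mul_one] at h
    rw [hactmul]
    exact h
  · intro x f
    have h := hactleib x f 1
    rwa [mul_one] at h
end

section
/- Lemma 2 (free extension): Let F be the free (tensor) algebra on a set M, made a bialgebra with a comultiplication Δ̃ such that Δ̃(M) ⊂ span(M₁ ⊗ M₁) where M₁ = M ∪ {1}, and let C be a unital algebra that is a left F-module algebra via ξ̃. Then for any map φ : M → C there exists a unique linear map φ̃ : F → C with φ̃(1) = 1, φ̃|_M = φ, and φ̃(xy) = (ξ̃_{x₍₁₎}·φ̃(y))·φ̃(x₍₂₎) for all x, y ∈ F. -/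
/-!
Since `F` is free, there is an algebra map `Θ : F → End C` sending a generator `m` to
`c ↦ ξ_{m₁}c · φ(m₂)`; put `φ̃ x = Θ_x 1`. Coassociativity and the Leibniz rule of `ξ` give the
twisted Leibniz rule `Θ_x (c d) = ξ_{x₁}c · Θ_{x₂}d` on generators (using `Δ m ∈ span (M₁ ⊗ M₁)`
to replace `φ` by `y ↦ Θ_y d`), and multiplicativity of `Δ` and `ξ` propagates it to products.
At `d = 1` it reads `Θ_x c = ξ_{x₁}c · φ̃(x₂)`, so `φ̃(x y) = Θ_x (φ̃ y)` is the required
recursion. For uniqueness, the recursion at `x = m` determines `φ̃` on words by induction on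
length, again because `Δ m` only involves `M₁`.
-/

open TensorProduct

noncomputable def swF {F C : Type*} [Ring F] [Algebra ℂ F] [Ring C] [Algebra ℂ C]
    (Δ : F →ₗ[ℂ] F ⊗[ℂ] F) (A B : F →ₗ[ℂ] C) : F →ₗ[ℂ] C :=
  LinearMap.mul' ℂ C ∘ₗ TensorProduct.map A B ∘ₗ Δ

noncomputable def actOnF {F C : Type*} [Ring F] [Algebra ℂ F] [Ring C] [Algebra ℂ C]
    (ξ : F →ₗ[ℂ] Module.End ℂ C) (f : C) : F →ₗ[ℂ] C :=
  LinearMap.applyₗ f ∘ₗ ξ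

theorem TensorProduct.map_eq_map_of_eqOn_of_mem_span {R M N P Q : Type*} [CommSemiring R]
    [AddCommMonoid M] [AddCommMonoid N] [AddCommMonoid P] [AddCommMonoid Q]
    [Module R M] [Module R N] [Module R P] [Module R Q]
    (A : M →ₗ[R] P) {B B' : N →ₗ[R] Q} {S : Set M} {T : Set N} (hB : Set.EqOn B B' T)
    {z : M ⊗[R] N} (hz : z ∈ Submodule.span R {w | ∃ a ∈ S, ∃ b ∈ T, w = a ⊗ₜ[R] b}) :
    map A B z = map A B' z :=
  LinearMap.eqOn_span (by rintro _ ⟨a, -, b, hb, rfl⟩; rw [map_tmul, map_tmul, hB hb]) hz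

theorem FreeAlgebra.submodule_eq_top_of_ι_mul_mem {R X : Type*} [CommSemiring R]
    (S : Submodule R (FreeAlgebra R X)) (h1 : 1 ∈ S) (hι : ∀ m x, x ∈ S → ι R m * x ∈ S) :
    S = ⊤ := by
  have htop : (⊤ : Submodule R (FreeAlgebra R X)) =
      Submodule.span R (Submonoid.closure (Set.range (ι R (X := X)))) := by
    rw [← Algebra.adjoin_eq_span, FreeAlgebra.adjoin_range_ι, Algebra.top_toSubmodule]
  rw [eq_top_iff, htop, Submodule.span_le]
  intro x hx
  induction hx using Submonoid.closure_induction_left with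
  | one => exact h1
  | mul_left _ hm _ _ h => obtain ⟨m, rfl⟩ := hm; exact hι m _ h

section Sweedler

variable {F C : Type*} [Ring F] [Algebra ℂ F] [Ring C] [Algebra ℂ C]

theorem swF_apply (Δ : F →ₗ[ℂ] F ⊗[ℂ] F) (A B : F →ₗ[ℂ] C) (x : F) :
    swF Δ A B x = LinearMap.mul' ℂ C (map A B (Δ x)) := rfl

theorem actOnF_apply (ξ : F →ₗ[ℂ] Module.End ℂ C) (c : C) (x : F) :
    actOnF ξ c x = ξ x c := rfl

theorem swF_one (Δ : F →ₐ[ℂ] F ⊗[ℂ] F) (A B : F →ₗ[ℂ] C) :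
    swF Δ.toLinearMap A B 1 = A 1 * B 1 := by
  simp [swF_apply, Algebra.TensorProduct.one_def]

theorem swF_assoc {Δ : F →ₗ[ℂ] F ⊗[ℂ] F}
    (hcoassoc : ∀ x : F,
      TensorProduct.assoc ℂ F F F (map Δ LinearMap.id (Δ x)) = map LinearMap.id Δ (Δ x))
    (A B G : F →ₗ[ℂ] C) :
    swF Δ (swF Δ A B) G = swF Δ A (swF Δ B G) := by
  have hreassoc : LinearMap.mul' ℂ C ∘ₗ map (LinearMap.mul' ℂ C ∘ₗ map A B) G =
      (LinearMap.mul' ℂ C ∘ₗ map A (LinearMap.mul' ℂ C ∘ₗ map B G)) ∘ₗ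
        (TensorProduct.assoc ℂ F F F).toLinearMap :=
    TensorProduct.ext_threefold fun u v w => by simp [mul_assoc]
  ext x
  calc swF Δ (swF Δ A B) G x
      = (LinearMap.mul' ℂ C ∘ₗ map (LinearMap.mul' ℂ C ∘ₗ map A B) G)
          (map Δ LinearMap.id (Δ x)) := by
        rw [LinearMap.comp_apply, map_map, LinearMap.comp_id]; rfl
    _ = swF Δ A (swF Δ B G) x := by
        rw [hreassoc, LinearMap.comp_apply, LinearEquiv.coe_coe, hcoassoc, LinearMap.comp_apply,
          map_map, LinearMap.comp_id]; rfl

theorem actOnF_mul {Δ : F →ₗ[ℂ] F ⊗[ℂ] F} {ξ : F →ₗ[ℂ] Module.End ℂ C}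
    (hξleib : ∀ (x : F) (f g : C), ξ x (f * g) = swF Δ (actOnF ξ f) (actOnF ξ g) x)
    (f g : C) : actOnF ξ (f * g) = swF Δ (actOnF ξ f) (actOnF ξ g) :=
  LinearMap.ext fun x => hξleib x f g

theorem swF_actOnF_one {Δ : F →ₗ[ℂ] F ⊗[ℂ] F} {ε : F →ₗ[ℂ] ℂ} {ξ : F →ₗ[ℂ] Module.End ℂ C}
    (hξunit : ∀ x : F, ξ x 1 = ε x • (1 : C))
    (hcounitl : ∀ x : F, TensorProduct.lid ℂ F (map ε LinearMap.id (Δ x)) = x)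
    (B : F →ₗ[ℂ] C) (x : F) : swF Δ (actOnF ξ 1) B x = B x := by
  have h : LinearMap.mul' ℂ C ∘ₗ map (actOnF ξ 1) B =
      B ∘ₗ (TensorProduct.lid ℂ F).toLinearMap ∘ₗ map ε LinearMap.id :=
    TensorProduct.ext' fun u v => by simp [actOnF_apply, hξunit]
  rw [swF_apply, ← LinearMap.comp_apply, h]
  simp [hcounitl]

noncomputable def swEnd (Δ : F →ₗ[ℂ] F ⊗[ℂ] F) (ξ : F →ₗ[ℂ] Module.End ℂ C) (B : F →ₗ[ℂ] C)
    (x : F) : Module.End ℂ C where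
  toFun c := swF Δ (actOnF ξ c) B x
  map_add' c c' := by simp [swF_apply, actOnF, LinearMap.add_comp, map_add_left]
  map_smul' r c := by simp [swF_apply, actOnF, LinearMap.smul_comp, map_smul_left]

/-- The Leibniz rule of a module algebra reads `∀ x, LeibnizAt Δ ξ ξ x`. -/
def LeibnizAt (Δ : F →ₗ[ℂ] F ⊗[ℂ] F) (ξ T : F →ₗ[ℂ] Module.End ℂ C) (x : F) : Prop :=
  ∀ c d : C, T x (c * d) = swF Δ (actOnF ξ c) (actOnF T d) x

theorem leibnizAt_algebraMap (Δ : F →ₐ[ℂ] F ⊗[ℂ] F) {ξ : F →ₗ[ℂ] Module.End ℂ C}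
    (hξone : ξ 1 = LinearMap.id) (Θ : F →ₐ[ℂ] Module.End ℂ C) (r : ℂ) :
    LeibnizAt Δ.toLinearMap ξ Θ.toLinearMap (algebraMap ℂ F r) := by
  intro c d
  simp [Algebra.algebraMap_eq_smul_one, swF_one, actOnF_apply, hξone]

theorem mul'_map_actOnF_mul_tmul {ξ : F →ₗ[ℂ] Module.End ℂ C}
    (hξmul : ∀ x y : F, ξ (x * y) = ξ x ∘ₗ ξ y) (Θ : F →ₐ[ℂ] Module.End ℂ C)
    (c d : C) (u v : F) (w : F ⊗[ℂ] F) :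
    LinearMap.mul' ℂ C (map (actOnF ξ c) (actOnF Θ.toLinearMap d) (w * u ⊗ₜ v)) =
      LinearMap.mul' ℂ C (map (actOnF ξ (ξ u c)) (actOnF Θ.toLinearMap (Θ v d)) w) := by
  induction w using TensorProduct.induction_on with
  | zero => simp
  | tmul p q => simp [actOnF_apply, hξmul]
  | add w w' h h' => simp only [add_mul, map_add, h, h']

theorem LeibnizAt.mul {Δ : F →ₐ[ℂ] F ⊗[ℂ] F} {ξ : F →ₗ[ℂ] Module.End ℂ C}
    (hξmul : ∀ x y : F, ξ (x * y) = ξ x ∘ₗ ξ y) {Θ : F →ₐ[ℂ] Module.End ℂ C} {x y : F}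
    (hx : LeibnizAt Δ.toLinearMap ξ Θ.toLinearMap x)
    (hy : LeibnizAt Δ.toLinearMap ξ Θ.toLinearMap y) :
    LeibnizAt Δ.toLinearMap ξ Θ.toLinearMap (x * y) := by
  intro c d
  have hx' : ∀ z : F ⊗[ℂ] F,
      Θ x (LinearMap.mul' ℂ C (map (actOnF ξ c) (actOnF Θ.toLinearMap d) z)) =
        LinearMap.mul' ℂ C (map (actOnF ξ c) (actOnF Θ.toLinearMap d) (Δ x * z)) := by
    intro z
    induction z using TensorProduct.induction_on with
    | zero => simp
    | tmul u v =>
      rw [map_tmul, LinearMap.mul'_apply, actOnF_apply, actOnF_apply]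
      exact (hx _ _).trans (mul'_map_actOnF_mul_tmul hξmul Θ c d u v (Δ x)).symm
    | add z z' h h' => simp only [mul_add, map_add, h, h']
  simp only [LeibnizAt, AlgHom.toLinearMap_apply] at hy ⊢
  rw [map_mul Θ, Module.End.mul_apply, hy, swF_apply, hx', swF_apply, AlgHom.toLinearMap_apply,
    AlgHom.toLinearMap_apply, map_mul Δ]

end Sweedler

section FreeExtension

open FreeAlgebra

variable {M C : Type*} [Ring C] [Algebra ℂ C]

def genTensorSpan (M : Type*) : Submodule ℂ (FreeAlgebra ℂ M ⊗[ℂ] FreeAlgebra ℂ M) :=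
  Submodule.span ℂ {z | ∃ a ∈ (Set.range (ι ℂ (X := M)) ∪ {1}),
    ∃ b ∈ (Set.range (ι ℂ (X := M)) ∪ {1}), z = a ⊗ₜ[ℂ] b}

noncomputable def liftEnd (Δ : FreeAlgebra ℂ M →ₗ[ℂ] FreeAlgebra ℂ M ⊗[ℂ] FreeAlgebra ℂ M)
    (ξ : FreeAlgebra ℂ M →ₗ[ℂ] Module.End ℂ C) (φ : M → C) :
    FreeAlgebra ℂ M →ₐ[ℂ] Module.End ℂ C :=
  lift ℂ fun m => swEnd Δ ξ (lift ℂ φ).toLinearMap (ι ℂ m)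

noncomputable def freeExtension (Δ : FreeAlgebra ℂ M →ₗ[ℂ] FreeAlgebra ℂ M ⊗[ℂ] FreeAlgebra ℂ M)
    (ξ : FreeAlgebra ℂ M →ₗ[ℂ] Module.End ℂ C) (φ : M → C) : FreeAlgebra ℂ M →ₗ[ℂ] C :=
  actOnF (liftEnd Δ ξ φ).toLinearMap 1

theorem liftEnd_ι_apply (Δ : FreeAlgebra ℂ M →ₗ[ℂ] FreeAlgebra ℂ M ⊗[ℂ] FreeAlgebra ℂ M)
    (ξ : FreeAlgebra ℂ M →ₗ[ℂ] Module.End ℂ C) (φ : M → C) (m : M) (c : C) :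
    liftEnd Δ ξ φ (ι ℂ m) c = swF Δ (actOnF ξ c) (lift ℂ φ).toLinearMap (ι ℂ m) := by
  rw [liftEnd, lift_ι_apply]
  rfl

theorem swF_ι_eq_of_eq_one_of_eq_ι
    {Δ : FreeAlgebra ℂ M →ₗ[ℂ] FreeAlgebra ℂ M ⊗[ℂ] FreeAlgebra ℂ M}
    (hspan : ∀ m : M, Δ (ι ℂ m) ∈ genTensorSpan M) (A : FreeAlgebra ℂ M →ₗ[ℂ] C)
    {B B' : FreeAlgebra ℂ M →ₗ[ℂ] C} (h1 : B 1 = B' 1) (hι : ∀ m, B (ι ℂ m) = B' (ι ℂ m))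
    (m : M) : swF Δ A B (ι ℂ m) = swF Δ A B' (ι ℂ m) := by
  rw [swF_apply, swF_apply, map_eq_map_of_eqOn_of_mem_span A ?_ (hspan m)]
  rintro _ (⟨m', rfl⟩ | rfl)
  exacts [hι m', h1]

theorem eq_of_swF_recursion {Δ : FreeAlgebra ℂ M →ₗ[ℂ] FreeAlgebra ℂ M ⊗[ℂ] FreeAlgebra ℂ M}
    (hspan : ∀ m : M, Δ (ι ℂ m) ∈ genTensorSpan M) {ξ : FreeAlgebra ℂ M →ₗ[ℂ] Module.End ℂ C}
    {ψ ψ' : FreeAlgebra ℂ M →ₗ[ℂ] C} (h1 : ψ 1 = ψ' 1) (hι : ∀ m, ψ (ι ℂ m) = ψ' (ι ℂ m))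
    (hψ : ∀ m y, ψ (ι ℂ m * y) = swF Δ (actOnF ξ (ψ y)) ψ (ι ℂ m))
    (hψ' : ∀ m y, ψ' (ι ℂ m * y) = swF Δ (actOnF ξ (ψ' y)) ψ' (ι ℂ m)) :
    ψ = ψ' := by
  refine LinearMap.eqLocus_eq_top.mp
    (submodule_eq_top_of_ι_mul_mem _ h1 fun m y (hy : ψ y = ψ' y) => ?_)
  change ψ (ι ℂ m * y) = ψ' (ι ℂ m * y)
  rw [hψ, hψ', hy, swF_ι_eq_of_eq_one_of_eq_ι hspan _ h1 hι]

theorem freeExtension_one (Δ : FreeAlgebra ℂ M →ₗ[ℂ] FreeAlgebra ℂ M ⊗[ℂ] FreeAlgebra ℂ M)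
    (ξ : FreeAlgebra ℂ M →ₗ[ℂ] Module.End ℂ C) (φ : M → C) : freeExtension Δ ξ φ 1 = 1 := by
  simp [freeExtension, actOnF_apply]

theorem freeExtension_ι {Δ : FreeAlgebra ℂ M →ₗ[ℂ] FreeAlgebra ℂ M ⊗[ℂ] FreeAlgebra ℂ M}
    {ε : FreeAlgebra ℂ M →ₗ[ℂ] ℂ} {ξ : FreeAlgebra ℂ M →ₗ[ℂ] Module.End ℂ C}
    (hξunit : ∀ x, ξ x 1 = ε x • (1 : C))
    (hcounitl : ∀ x, TensorProduct.lid ℂ (FreeAlgebra ℂ M) (map ε LinearMap.id (Δ x)) = x)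
    (φ : M → C) (m : M) : freeExtension Δ ξ φ (ι ℂ m) = φ m := by
  rw [freeExtension, actOnF_apply, AlgHom.toLinearMap_apply, liftEnd_ι_apply,
    swF_actOnF_one hξunit hcounitl, AlgHom.toLinearMap_apply, lift_ι_apply]

variable {Δ : FreeAlgebra ℂ M →ₐ[ℂ] FreeAlgebra ℂ M ⊗[ℂ] FreeAlgebra ℂ M}
  {ξ : FreeAlgebra ℂ M →ₗ[ℂ] Module.End ℂ C}
  (hcoassoc : ∀ x, TensorProduct.assoc ℂ _ _ _ (map Δ.toLinearMap LinearMap.id (Δ x)) =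
    map LinearMap.id Δ.toLinearMap (Δ x))
  (hspan : ∀ m : M, Δ (ι ℂ m) ∈ genTensorSpan M)
  (hξone : ξ 1 = LinearMap.id)
  (hξleib : ∀ x f g, ξ x (f * g) = swF Δ.toLinearMap (actOnF ξ f) (actOnF ξ g) x)
include hcoassoc hspan hξone hξleib

theorem leibnizAt_liftEnd_ι (φ : M → C) (m : M) :
    LeibnizAt Δ.toLinearMap ξ (liftEnd Δ.toLinearMap ξ φ).toLinearMap (ι ℂ m) := by
  intro c d
  rw [AlgHom.toLinearMap_apply, liftEnd_ι_apply, actOnF_mul hξleib, swF_assoc hcoassoc]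
  -- `Δ m` only involves `M₁`, where `y ↦ ξ_{y₁}d · φ(y₂)` and `y ↦ Θ_y d` agree.
  refine swF_ι_eq_of_eq_one_of_eq_ι hspan _ ?_ (fun m' => ?_) m
  · simp [swF_one, actOnF_apply, hξone]
  · rw [actOnF_apply, AlgHom.toLinearMap_apply, liftEnd_ι_apply]

variable (hξmul : ∀ x y, ξ (x * y) = ξ x ∘ₗ ξ y)
include hξmul

theorem leibnizAt_liftEnd (φ : M → C) (x : FreeAlgebra ℂ M) :
    LeibnizAt Δ.toLinearMap ξ (liftEnd Δ.toLinearMap ξ φ).toLinearMap x := by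
  induction x using FreeAlgebra.induction with
  | grade0 r => exact leibnizAt_algebraMap Δ hξone _ r
  | grade1 m => exact leibnizAt_liftEnd_ι hcoassoc hspan hξone hξleib φ m
  | mul x y hx hy => exact hx.mul hξmul hy
  | add x y hx hy =>
    intro c d
    simp only [map_add, LinearMap.add_apply, hx c d, hy c d]

theorem liftEnd_apply_eq_swF (φ : M → C) (x : FreeAlgebra ℂ M) (c : C) :
    liftEnd Δ.toLinearMap ξ φ x c =
      swF Δ.toLinearMap (actOnF ξ c) (freeExtension Δ.toLinearMap ξ φ) x := by
  have h := leibnizAt_liftEnd hcoassoc hspan hξone hξleib hξmul φ x c 1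
  rwa [mul_one] at h

theorem freeExtension_mul (φ : M → C) (x y : FreeAlgebra ℂ M) :
    freeExtension Δ.toLinearMap ξ φ (x * y) =
      swF Δ.toLinearMap (actOnF ξ (freeExtension Δ.toLinearMap ξ φ y))
        (freeExtension Δ.toLinearMap ξ φ) x := by
  rw [← liftEnd_apply_eq_swF hcoassoc hspan hξone hξleib hξmul]
  simp [freeExtension, actOnF_apply]

end FreeExtension

theorem lemma2_free_extension_general {M C : Type*} [Ring C] [Algebra ℂ C]
    (Δ : FreeAlgebra ℂ M →ₐ[ℂ] FreeAlgebra ℂ M ⊗[ℂ] FreeAlgebra ℂ M)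
    (ε : FreeAlgebra ℂ M →ₐ[ℂ] ℂ)
    (hcoassoc : ∀ x : FreeAlgebra ℂ M,
      (TensorProduct.assoc ℂ _ _ _)
        ((TensorProduct.map Δ.toLinearMap LinearMap.id) (Δ x)) =
      (TensorProduct.map LinearMap.id Δ.toLinearMap) (Δ x))
    (hcounitl : ∀ x : FreeAlgebra ℂ M,
      (TensorProduct.lid ℂ (FreeAlgebra ℂ M))
        ((TensorProduct.map ε.toLinearMap LinearMap.id) (Δ x)) = x)
    (hspan : ∀ m : M, Δ (FreeAlgebra.ι ℂ m) ∈
      Submodule.span ℂ {z : FreeAlgebra ℂ M ⊗[ℂ] FreeAlgebra ℂ M |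
        ∃ a ∈ (Set.range (FreeAlgebra.ι ℂ (X := M)) ∪ {1}),
        ∃ b ∈ (Set.range (FreeAlgebra.ι ℂ (X := M)) ∪ {1}), z = a ⊗ₜ[ℂ] b})
    (ξ : FreeAlgebra ℂ M →ₗ[ℂ] Module.End ℂ C)
    (hξone : ξ 1 = LinearMap.id)
    (hξmul : ∀ x y : FreeAlgebra ℂ M, ξ (x * y) = ξ x ∘ₗ ξ y)
    (hξunit : ∀ x : FreeAlgebra ℂ M, ξ x 1 = ε x • (1 : C))
    (hξleib : ∀ (x : FreeAlgebra ℂ M) (f g : C),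
      ξ x (f * g) = swF Δ.toLinearMap (actOnF ξ f) (actOnF ξ g) x)
    (φ : M → C) :
    ∃! φt : FreeAlgebra ℂ M →ₗ[ℂ] C,
      φt 1 = 1 ∧ (∀ m : M, φt (FreeAlgebra.ι ℂ m) = φ m) ∧
      ∀ x y : FreeAlgebra ℂ M,
        φt (x * y) = swF Δ.toLinearMap (actOnF ξ (φt y)) φt x := by
  have hmul := freeExtension_mul hcoassoc hspan hξone hξleib hξmul φ
  refine ⟨freeExtension Δ.toLinearMap ξ φ,
    ⟨freeExtension_one _ ξ φ, freeExtension_ι hξunit hcounitl φ, hmul⟩, ?_⟩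
  rintro ψ ⟨hψ1, hψι, hψmul⟩
  exact eq_of_swF_recursion hspan (hψ1.trans (freeExtension_one _ ξ φ).symm)
    (fun m => (hψι m).trans (freeExtension_ι hξunit hcounitl φ m).symm)
    (fun _ => hψmul _) (fun _ => hmul _)

/-- Lemma 2: on the free algebra `F = FreeAlgebra ℂ M`, equipped with a bialgebra
structure `(Δ, ε)` whose comultiplication sends generators into
`span(M₁ ⊗ M₁)` with `M₁ = M ∪ {1}`, any assignment `φ : M → C` extends uniquely
to a linear `φ̃ : F → C` with `φ̃(1) = 1` and `φ̃(xy) = (ξ̃_{x₍₁₎}·φ̃(y))·φ̃(x₍₂₎)`. -/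
theorem lemma2_free_extension {M C : Type*} [Ring C] [Algebra ℂ C]
    (Δ : FreeAlgebra ℂ M →ₐ[ℂ] FreeAlgebra ℂ M ⊗[ℂ] FreeAlgebra ℂ M)
    (ε : FreeAlgebra ℂ M →ₐ[ℂ] ℂ)
    (hcoassoc : ∀ x : FreeAlgebra ℂ M,
      (TensorProduct.assoc ℂ _ _ _)
        ((TensorProduct.map Δ.toLinearMap LinearMap.id) (Δ x)) =
      (TensorProduct.map LinearMap.id Δ.toLinearMap) (Δ x))
    (hcounitl : ∀ x : FreeAlgebra ℂ M,
      (TensorProduct.lid ℂ (FreeAlgebra ℂ M))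
        ((TensorProduct.map ε.toLinearMap LinearMap.id) (Δ x)) = x)
    (hcounitr : ∀ x : FreeAlgebra ℂ M,
      (TensorProduct.rid ℂ (FreeAlgebra ℂ M))
        ((TensorProduct.map LinearMap.id ε.toLinearMap) (Δ x)) = x)
    (hspan : ∀ m : M, Δ (FreeAlgebra.ι ℂ m) ∈
      Submodule.span ℂ {z : FreeAlgebra ℂ M ⊗[ℂ] FreeAlgebra ℂ M |
        ∃ a ∈ (Set.range (FreeAlgebra.ι ℂ (X := M)) ∪ {1}),
        ∃ b ∈ (Set.range (FreeAlgebra.ι ℂ (X := M)) ∪ {1}), z = a ⊗ₜ[ℂ] b})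
    (ξ : FreeAlgebra ℂ M →ₗ[ℂ] Module.End ℂ C)
    (hξone : ξ 1 = LinearMap.id)
    (hξmul : ∀ x y : FreeAlgebra ℂ M, ξ (x * y) = ξ x ∘ₗ ξ y)
    (hξunit : ∀ x : FreeAlgebra ℂ M, ξ x 1 = ε x • (1 : C))
    (hξleib : ∀ (x : FreeAlgebra ℂ M) (f g : C),
      ξ x (f * g) = swF Δ.toLinearMap (actOnF ξ f) (actOnF ξ g) x)
    (φ : M → C) :
    ∃! φt : FreeAlgebra ℂ M →ₗ[ℂ] C,
      φt 1 = 1 ∧ (∀ m : M, φt (FreeAlgebra.ι ℂ m) = φ m) ∧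
      ∀ x y : FreeAlgebra ℂ M,
        φt (x * y) = swF Δ.toLinearMap (actOnF ξ (φt y)) φt x :=
  lemma2_free_extension_general Δ ε hcoassoc hcounitl hspan ξ hξone hξmul hξunit hξleib φ
end

section
/- Proposition 3 (factorization): Let F be the free bialgebra on generators M as in Lemma 2, let R ⊂ F be a set of relations whose generated two-sided ideal ⟨R⟩ is a coideal (Δ̃(R) ⊂ ⟨R⟩⊗F + F⊗⟨R⟩), set U = F/⟨R⟩ with quotient map π, and let C be a left U-module algebra pulled back to F via ξ̃_x := ξ_{π(x)}. Let φ̃ : F → C be the extension from Lemma 2 of a map φ : M → C. If (π ⊗ φ̃)∘Δ̃ vanishes on R, then φ̃ vanishes on all of ⟨R⟩, hence φ̃ factors through a unique linear map φ' : U → C with φ' ∘ π = φ̃, and φ' satisfies φ'(1)=1 and φ'(xy) = (ξ_{x₍₁₎}·φ'(y))·φ'(x₍₂₎). -/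
open TensorProduct


/-- Proposition 3 (first part): if `(π ⊗ φ̃)∘Δ̃` vanishes on the relation set `R`,
then `φ̃` vanishes on the two-sided ideal `⟨R⟩`, hence factors through a unique
linear `φ' : U → C`, which satisfies `φ'(1) = 1` and the twisted multiplicativity. -/
theorem prop3_factorization {M U C : Type*} [Ring U] [Bialgebra ℂ U]
    [Ring C] [Algebra ℂ C]
    (Δ : FreeAlgebra ℂ M →ₐ[ℂ] FreeAlgebra ℂ M ⊗[ℂ] FreeAlgebra ℂ M)
    (ε : FreeAlgebra ℂ M →ₐ[ℂ] ℂ)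
    (S : Set (FreeAlgebra ℂ M))
    (π : FreeAlgebra ℂ M →ₐ[ℂ] U)
    (hπsurj : Function.Surjective π)
    -- the kernel of `π` is the two-sided ideal generated by `S`
    (hker : ∀ x : FreeAlgebra ℂ M, π x = 0 ↔
      x ∈ Submodule.span ℂ {x : FreeAlgebra ℂ M |
        ∃ a : FreeAlgebra ℂ M, ∃ r ∈ S, ∃ b : FreeAlgebra ℂ M, x = a * r * b})
    -- `π` intertwines the comultiplications and counits
    (hπcomul : ∀ x : FreeAlgebra ℂ M,
      Coalgebra.comul (R := ℂ) (π x) =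
        (TensorProduct.map π.toLinearMap π.toLinearMap) (Δ x))
    (hπcounit : ∀ x : FreeAlgebra ℂ M,
      Coalgebra.counit (R := ℂ) (π x) = ε x)
    -- `C` is a left `U`-module algebra via `ξ`
    (ξ : U →ₗ[ℂ] Module.End ℂ C)
    (hξone : ξ 1 = LinearMap.id)
    (hξmul : ∀ x y : U, ξ (x * y) = ξ x ∘ₗ ξ y)
    (hξunit : ∀ x : U, ξ x 1 = Coalgebra.counit (R := ℂ) x • (1 : C))
    (hξleib : ∀ (x : U) (f g : C), ξ x (f * g) = sw (actOn ξ f) (actOn ξ g) x)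
    -- `φ̃` is the Lemma-2 extension (w.r.t. the pulled back action `ξ̃ = ξ ∘ π`)
    (φt : FreeAlgebra ℂ M →ₗ[ℂ] C)
    (hφtone : φt 1 = 1)
    (hφtmul : ∀ x y : FreeAlgebra ℂ M,
      φt (x * y) =
        swF Δ.toLinearMap (actOnF (ξ ∘ₗ π.toLinearMap) (φt y)) φt x)
    -- main hypothesis: `(π ⊗ φ̃)(Δ̃ r) = 0` for all `r ∈ R`
    (hvanish : ∀ r ∈ S, (TensorProduct.map π.toLinearMap φt) (Δ r) = 0) :
    (∀ x ∈ Submodule.span ℂ {x : FreeAlgebra ℂ M |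
        ∃ a : FreeAlgebra ℂ M, ∃ r ∈ S, ∃ b : FreeAlgebra ℂ M, x = a * r * b},
      φt x = 0) ∧
    (∃! φ' : U →ₗ[ℂ] C, φ' ∘ₗ π.toLinearMap = φt) ∧
    (∀ φ' : U →ₗ[ℂ] C, φ' ∘ₗ π.toLinearMap = φt →
      φ' 1 = 1 ∧ ∀ x y : U, φ' (x * y) = sw (actOn ξ (φ' y)) φ' x) := by
  -- Step 1: vanishing on the ideal
  have hvan : ∀ x ∈ Submodule.span ℂ {x : FreeAlgebra ℂ M |
      ∃ a : FreeAlgebra ℂ M, ∃ r ∈ S, ∃ b : FreeAlgebra ℂ M, x = a * r * b},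
      φt x = 0 := by
    intro x hx
    induction hx using Submodule.span_induction with
    | mem x hx =>
      obtain ⟨a, r, hr, b, rfl⟩ := hx
      have h1 : φt (r * b) = 0 := by
        rw [hφtmul]
        have hv : (TensorProduct.map π.toLinearMap φt) (Δ.toLinearMap r) = 0 := hvanish r hr
        simp only [swF, actOnF, LinearMap.comp_apply]
        have heq : TensorProduct.map ((LinearMap.applyₗ (φt b)) ∘ₗ (ξ ∘ₗ π.toLinearMap)) φt
            = (TensorProduct.map ((LinearMap.applyₗ (φt b)) ∘ₗ ξ) LinearMap.id) ∘ₗ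
              TensorProduct.map π.toLinearMap φt := by
          rw [← TensorProduct.map_comp]
          simp [LinearMap.comp_assoc]
        rw [heq, LinearMap.comp_apply, hv]
        simp
      rw [mul_assoc, hφtmul, h1]
      have hz : actOnF (ξ ∘ₗ π.toLinearMap) (0 : C) = 0 := by
        ext z; simp [actOnF]
      rw [hz]
      simp [swF]
    | zero => simp
    | add a b _ _ ha hb => simp [ha, hb]
    | smul c a _ ha => simp [ha]
  have hle : LinearMap.ker π.toLinearMap ≤ LinearMap.ker φt := by
    intro x hx
    rw [LinearMap.mem_ker] at hx ⊢
    exact hvan x ((hker x).mp hx)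
  set e := LinearMap.quotKerEquivOfSurjective π.toLinearMap hπsurj with he
  have hmk : ∀ x : FreeAlgebra ℂ M, e.symm (π x) = Submodule.Quotient.mk x := by
    intro x
    apply e.injective
    rw [LinearEquiv.apply_symm_apply]
    rfl
  set φ'₀ : U →ₗ[ℂ] C :=
    ((LinearMap.ker π.toLinearMap).liftQ φt hle) ∘ₗ e.symm.toLinearMap with hφ'₀
  have hfac : φ'₀ ∘ₗ π.toLinearMap = φt := by
    ext x
    simp only [hφ'₀, LinearMap.comp_apply, LinearEquiv.coe_toLinearMap]
    rw [show π.toLinearMap x = π x from rfl, hmk x]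
    simp
  refine ⟨hvan, ⟨φ'₀, hfac, ?_⟩, ?_⟩
  · intro ψ hψ
    apply LinearMap.ext
    intro u
    obtain ⟨x, rfl⟩ := hπsurj u
    have h1 := LinearMap.congr_fun hψ x
    have h2 := LinearMap.congr_fun hfac x
    simp only [LinearMap.comp_apply] at h1 h2
    rw [show (π x : U) = π.toLinearMap x from rfl, h1, h2]
  · intro φ' hφ'
    have happ : ∀ x : FreeAlgebra ℂ M, φ' (π x) = φt x := fun x =>
      LinearMap.congr_fun hφ' x
    constructor
    · have := happ 1
      rw [map_one] at this
      rw [this, hφtone]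
    · intro x y
      obtain ⟨a, rfl⟩ := hπsurj x
      obtain ⟨b, rfl⟩ := hπsurj y
      rw [← map_mul, happ, hφtmul]
      simp only [sw, swF, LinearMap.comp_apply, hπcomul]
      rw [← LinearMap.comp_apply (TensorProduct.map _ _) (TensorProduct.map _ _),
        ← TensorProduct.map_comp]
      have h2 : actOn ξ (φ' (π b)) ∘ₗ π.toLinearMap
          = actOnF (ξ ∘ₗ π.toLinearMap) (φt b) := by
        ext z; simp [actOn, actOnF, happ b]
      rw [h2, hφ']
      rfl
end

section
/- Proposition 3, second part: With the setup of Proposition 3, if R satisfies the stronger coideal-type condition Δ̃(R) ⊂ ⟨R⟩ ⊗ F + F ⊗ F·R (where F·R is the left ideal generated by R), then the weaker condition φ̃(R) = 0 already implies (π ⊗ φ̃)∘Δ̃(R) = 0, and hence φ̃ vanishes on ⟨R⟩ and factors to φ' : U → C satisfying φ'(1)=1 and φ'(xy) = (ξ_{x₍₁₎}·φ'(y))·φ'(x₍₂₎). -/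
open TensorProduct


lemma actOnF_zero {F C : Type*} [Ring F] [Algebra ℂ F] [Ring C] [Algebra ℂ C]
    (ξ : F →ₗ[ℂ] Module.End ℂ C) : actOnF ξ (0 : C) = 0 := by
  ext x; simp [actOnF]

lemma swF_zero_left {F C : Type*} [Ring F] [Algebra ℂ F] [Ring C] [Algebra ℂ C]
    (Δ : F →ₗ[ℂ] F ⊗[ℂ] F) (B : F →ₗ[ℂ] C) : swF Δ 0 B = 0 := by
  ext x
  simp only [swF, LinearMap.comp_apply, LinearMap.zero_apply]
  have : TensorProduct.map (0 : F →ₗ[ℂ] C) B = 0 := by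
    ext a b; simp
  rw [this]; simp

/-- Proposition 3 (second part): if `Δ̃(R) ⊂ ⟨R⟩ ⊗ F + F ⊗ F·R`, then `φ̃(R) = 0`
already implies `(π ⊗ φ̃)∘Δ̃(R) = 0`, hence `φ̃` vanishes on `⟨R⟩` and factors
through a unique `φ' : U → C` satisfying the conditions of Proposition 1. -/
theorem prop3_second_part {M U C : Type*} [Ring U] [Bialgebra ℂ U]
    [Ring C] [Algebra ℂ C]
    (Δ : FreeAlgebra ℂ M →ₐ[ℂ] FreeAlgebra ℂ M ⊗[ℂ] FreeAlgebra ℂ M)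
    (ε : FreeAlgebra ℂ M →ₐ[ℂ] ℂ)
    (S : Set (FreeAlgebra ℂ M))
    (π : FreeAlgebra ℂ M →ₐ[ℂ] U)
    (hπsurj : Function.Surjective π)
    (hker : ∀ x : FreeAlgebra ℂ M, π x = 0 ↔
      x ∈ Submodule.span ℂ {x : FreeAlgebra ℂ M |
        ∃ a : FreeAlgebra ℂ M, ∃ r ∈ S, ∃ b : FreeAlgebra ℂ M, x = a * r * b})
    (hπcomul : ∀ x : FreeAlgebra ℂ M,
      Coalgebra.comul (R := ℂ) (π x) =
        (TensorProduct.map π.toLinearMap π.toLinearMap) (Δ x))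
    (hπcounit : ∀ x : FreeAlgebra ℂ M,
      Coalgebra.counit (R := ℂ) (π x) = ε x)
    (ξ : U →ₗ[ℂ] Module.End ℂ C)
    (hξone : ξ 1 = LinearMap.id)
    (hξmul : ∀ x y : U, ξ (x * y) = ξ x ∘ₗ ξ y)
    (hξunit : ∀ x : U, ξ x 1 = Coalgebra.counit (R := ℂ) x • (1 : C))
    (hξleib : ∀ (x : U) (f g : C), ξ x (f * g) = sw (actOn ξ f) (actOn ξ g) x)
    (φt : FreeAlgebra ℂ M →ₗ[ℂ] C)
    (hφtone : φt 1 = 1)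
    (hφtmul : ∀ x y : FreeAlgebra ℂ M,
      φt (x * y) =
        swF Δ.toLinearMap (actOnF (ξ ∘ₗ π.toLinearMap) (φt y)) φt x)
    -- the stronger coideal-type condition `Δ̃(R) ⊂ ⟨R⟩ ⊗ F + F ⊗ F·R`
    (hstrong : ∀ r ∈ S, Δ r ∈
      Submodule.span ℂ {z : FreeAlgebra ℂ M ⊗[ℂ] FreeAlgebra ℂ M |
        ∃ a ∈ Submodule.span ℂ {x : FreeAlgebra ℂ M |
          ∃ a' : FreeAlgebra ℂ M, ∃ r' ∈ S, ∃ b' : FreeAlgebra ℂ M, x = a' * r' * b'},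
        ∃ b : FreeAlgebra ℂ M, z = a ⊗ₜ[ℂ] b} ⊔
      Submodule.span ℂ {z : FreeAlgebra ℂ M ⊗[ℂ] FreeAlgebra ℂ M |
        ∃ a : FreeAlgebra ℂ M,
        ∃ b ∈ Submodule.span ℂ {x : FreeAlgebra ℂ M |
          ∃ a' : FreeAlgebra ℂ M, ∃ r' ∈ S, x = a' * r'},
        z = a ⊗ₜ[ℂ] b})
    -- the weaker vanishing condition `φ̃(R) = 0`
    (hweak : ∀ r ∈ S, φt r = 0) :
    (∀ r ∈ S, (TensorProduct.map π.toLinearMap φt) (Δ r) = 0) ∧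
    (∀ x ∈ Submodule.span ℂ {x : FreeAlgebra ℂ M |
        ∃ a : FreeAlgebra ℂ M, ∃ r ∈ S, ∃ b : FreeAlgebra ℂ M, x = a * r * b},
      φt x = 0) ∧
    (∃! φ' : U →ₗ[ℂ] C, φ' ∘ₗ π.toLinearMap = φt) ∧
    (∀ φ' : U →ₗ[ℂ] C, φ' ∘ₗ π.toLinearMap = φt →
      φ' 1 = 1 ∧ ∀ x y : U, φ' (x * y) = sw (actOn ξ (φ' y)) φ' x) := by
  -- φt vanishes on the left ideal F·R
  have hleft : ∀ x ∈ Submodule.span ℂ {x : FreeAlgebra ℂ M |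
      ∃ a' : FreeAlgebra ℂ M, ∃ r' ∈ S, x = a' * r'}, φt x = 0 := by
    intro x hx
    induction hx using Submodule.span_induction with
    | mem x hx =>
      obtain ⟨a', r', hr', rfl⟩ := hx
      rw [hφtmul, hweak r' hr', actOnF_zero, swF_zero_left]; rfl
    | zero => simp
    | add x y _ _ hx hy => simp [hx, hy]
    | smul c x _ hx => simp [hx]
  -- Part 1: (π ⊗ φt)(Δ r) = 0
  have hspan1 : ∀ p ∈ Submodule.span ℂ {z : FreeAlgebra ℂ M ⊗[ℂ] FreeAlgebra ℂ M |
        ∃ a ∈ Submodule.span ℂ {x : FreeAlgebra ℂ M |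
          ∃ a' : FreeAlgebra ℂ M, ∃ r' ∈ S, ∃ b' : FreeAlgebra ℂ M, x = a' * r' * b'},
        ∃ b : FreeAlgebra ℂ M, z = a ⊗ₜ[ℂ] b},
      (TensorProduct.map π.toLinearMap φt) p = 0 := by
    intro p hp
    induction hp using Submodule.span_induction with
      | mem z hz =>
        obtain ⟨a, ha, b, rfl⟩ := hz
        have : π a = 0 := (hker a).mpr ha
        simp [TensorProduct.map_tmul, this]
      | zero => simp
      | add x y _ _ hx hy => simp [hx, hy]
      | smul c x _ hx => simp [hx]
  have hspan2 : ∀ q ∈ Submodule.span ℂ {z : FreeAlgebra ℂ M ⊗[ℂ] FreeAlgebra ℂ M |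
        ∃ a : FreeAlgebra ℂ M,
        ∃ b ∈ Submodule.span ℂ {x : FreeAlgebra ℂ M |
          ∃ a' : FreeAlgebra ℂ M, ∃ r' ∈ S, x = a' * r'},
        z = a ⊗ₜ[ℂ] b},
      (TensorProduct.map π.toLinearMap φt) q = 0 := by
    intro q hq
    induction hq using Submodule.span_induction with
      | mem z hz =>
        obtain ⟨a, b, hb, rfl⟩ := hz
        simp [TensorProduct.map_tmul, hleft b hb]
      | zero => simp
      | add x y _ _ hx hy => simp [hx, hy]
      | smul c x _ hx => simp [hx]
  have part1 : ∀ r ∈ S, (TensorProduct.map π.toLinearMap φt) (Δ r) = 0 := by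
    intro r hr
    obtain ⟨p, hp, q, hq, heq⟩ := Submodule.mem_sup.mp (hstrong r hr)
    rw [← heq, map_add, hspan1 p hp, hspan2 q hq, add_zero]
  -- φt vanishes on r * b for r ∈ S
  have hrb : ∀ r ∈ S, ∀ b : FreeAlgebra ℂ M, φt (r * b) = 0 := by
    intro r hr b
    rw [hφtmul]
    have key : TensorProduct.map (actOnF (ξ ∘ₗ π.toLinearMap) (φt b)) φt =
        (TensorProduct.map (LinearMap.applyₗ (φt b) ∘ₗ ξ) LinearMap.id) ∘ₗ
          TensorProduct.map π.toLinearMap φt := by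
      rw [← TensorProduct.map_comp]
      rfl
    simp only [swF, LinearMap.comp_apply, key, AlgHom.toLinearMap_apply, part1 r hr, map_zero]
  -- Part 2: φt vanishes on ⟨R⟩
  have part2 : ∀ x ∈ Submodule.span ℂ {x : FreeAlgebra ℂ M |
      ∃ a : FreeAlgebra ℂ M, ∃ r ∈ S, ∃ b : FreeAlgebra ℂ M, x = a * r * b},
      φt x = 0 := by
    intro x hx
    induction hx using Submodule.span_induction with
    | mem x hx =>
      obtain ⟨a, r, hr, b, rfl⟩ := hx
      rw [mul_assoc, hφtmul, hrb r hr b, actOnF_zero, swF_zero_left]; rfl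
    | zero => simp
    | add x y _ _ hx hy => simp [hx, hy]
    | smul c x _ hx => simp [hx]
  have hπL : Function.Surjective π.toLinearMap := hπsurj
  have hkerle : ∀ x, π.toLinearMap x = 0 → φt x = 0 := by
    intro x hx
    exact part2 x ((hker x).mp hx)
  -- Part 3: unique factorization
  set e := LinearMap.quotKerEquivOfSurjective π.toLinearMap hπL with he
  have hφ'def : ∀ x : FreeAlgebra ℂ M,
      ((LinearMap.ker π.toLinearMap).liftQ φt (fun x hx => hkerle x hx) ∘ₗ
        e.symm.toLinearMap) (π.toLinearMap x) = φt x := by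
    intro x
    have h1 : e (Submodule.Quotient.mk x) = π.toLinearMap x := rfl
    have h2 : e.symm (π.toLinearMap x) = Submodule.Quotient.mk x := by
      rw [← h1, LinearEquiv.symm_apply_apply]
    simp only [LinearMap.comp_apply, LinearEquiv.coe_coe, h2]
    rfl
  have part3 : ∃! φ' : U →ₗ[ℂ] C, φ' ∘ₗ π.toLinearMap = φt := by
    refine ⟨(LinearMap.ker π.toLinearMap).liftQ φt (fun x hx => hkerle x hx) ∘ₗ
      e.symm.toLinearMap, ?_, ?_⟩
    · ext x; exact hφ'def x
    · intro ψ hψ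
      ext u
      obtain ⟨x, rfl⟩ := hπL u
      exact (LinearMap.congr_fun hψ x).trans (hφ'def x).symm
  refine ⟨part1, part2, part3, ?_⟩
  -- Part 4
  intro φ' hφ'
  have hφ'app : ∀ x : FreeAlgebra ℂ M, φ' (π x) = φt x :=
    fun x => LinearMap.congr_fun hφ' x
  constructor
  · have := hφ'app 1
    rwa [map_one, hφtone] at this
  · intro x y
    obtain ⟨a, rfl⟩ := hπsurj x
    obtain ⟨b, rfl⟩ := hπsurj y
    have h1 : φ' (π a * π b) = φt (a * b) := by
      rw [← map_mul]; exact hφ'app (a * b)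
    rw [h1, hφtmul]
    -- RHS
    have hcomp : TensorProduct.map (actOn ξ (φ' (π b))) φ' ∘ₗ
        TensorProduct.map π.toLinearMap π.toLinearMap =
        TensorProduct.map (actOnF (ξ ∘ₗ π.toLinearMap) (φt b)) φt := by
      rw [← TensorProduct.map_comp, hφ']
      congr 1
      ext z; simp [actOn, actOnF, hφ'app b]
    have hkey : (TensorProduct.map (actOn ξ (φ' (π b))) φ')
        ((TensorProduct.map π.toLinearMap π.toLinearMap) (Δ a)) =
        (TensorProduct.map (actOnF (ξ ∘ₗ π.toLinearMap) (φt b)) φt) (Δ a) := by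
      rw [← LinearMap.comp_apply, hcomp]
    simp only [sw, swF, LinearMap.comp_apply, hπcomul a, hkey, AlgHom.toLinearMap_apply]
end

section
/- In the Uq(sl2) example, the map φ defined on generators by φ(q^{±H/2}) = q^{∓σ/2}·1, φ(X⁺) = −q^{−σ/2}[σ] z̄, φ(X⁻) = 0 annihilates all defining relations of Uq(sl2) when extended to the free algebra by the rule φ̃(xy) = (ξ̃_{x₍₁₎}·φ̃(y))·φ̃(x₍₂₎); in particular φ̃([X⁺,X⁻] − (q−q⁻¹)⁻¹(q^H − q^{−H})) = 0 and φ̃(q^{H/2}X^± − q^{±1}X^± q^{H/2}) = 0. -/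
open TensorProduct Polynomial

/-- The free algebra on the four generators `q^{H/2}, q^{-H/2}, X⁺, X⁻`. -/
abbrev Fsl2 : Type := FreeAlgebra ℂ (Fin 4)

/-- The generator `q^{H/2}`. -/
noncomputable def kP : Fsl2 := FreeAlgebra.ι ℂ 0
/-- The generator `q^{-H/2}`. -/
noncomputable def kM : Fsl2 := FreeAlgebra.ι ℂ 1
/-- The generator `X⁺`. -/
noncomputable def eP : Fsl2 := FreeAlgebra.ι ℂ 2
/-- The generator `X⁻`. -/
noncomputable def eM : Fsl2 := FreeAlgebra.ι ℂ 3

/-- The comultiplication on the free algebra: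
`Δ(q^{±H/2}) = q^{±H/2} ⊗ q^{±H/2}`, `Δ(X^±) = X^± ⊗ q^{-H/2} + q^{H/2} ⊗ X^±`. -/
noncomputable def Δsl2 : Fsl2 →ₐ[ℂ] Fsl2 ⊗[ℂ] Fsl2 :=
  FreeAlgebra.lift ℂ
    ![kP ⊗ₜ[ℂ] kP, kM ⊗ₜ[ℂ] kM,
      eP ⊗ₜ[ℂ] kM + kP ⊗ₜ[ℂ] eP, eM ⊗ₜ[ℂ] kM + kP ⊗ₜ[ℂ] eM]

/-- The symmetric `q`-number `[x] = (qˣ - q⁻ˣ)/(q - q⁻¹)` (complex powers). -/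
noncomputable def qnum (q : ℝ) (x : ℂ) : ℂ :=
  ((q : ℂ) ^ x - (q : ℂ) ^ (-x)) / ((q : ℂ) - (q : ℂ)⁻¹)

set_option maxHeartbeats 1000000 in
/-- The map `φ` given on generators by `φ(q^{±H/2}) = q^{∓σ/2}·1`,
`φ(X⁺) = -q^{-σ/2}[σ] z̄`, `φ(X⁻) = 0`, extended to the free algebra by
`φ̃(xy) = (ξ̃_{x₍₁₎}·φ̃(y))·φ̃(x₍₂₎)`, annihilates all defining relations of
`U_q(sl₂)`. -/
theorem uqsl2_phi_annihilates_relations (q : ℝ) (hq : 0 < q) (hq1 : q ≠ 1) (σ : ℂ)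
    -- the pulled-back module algebra action of the free algebra on `ℂ[z̄]`
    (ρ : Fsl2 →ₐ[ℂ] Module.End ℂ (Polynomial ℂ))
    (hρK : ∀ n : ℕ, ρ kP (X ^ n) = ((q : ℂ) ^ (n : ℂ)) • X ^ n)
    (hρKinv : ∀ n : ℕ, ρ kM (X ^ n) = ((q : ℂ) ^ (-(n : ℂ))) • X ^ n)
    (hρE : ∀ n : ℕ, ρ eP (X ^ n) = qnum q (n : ℂ) • X ^ (n + 1))
    (hρF0 : ρ eM 1 = 0)
    (hρF : ∀ n : ℕ, ρ eM (X ^ (n + 1)) = (-qnum q ((n : ℂ) + 1)) • X ^ n)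
    -- `φ̃` is the Lemma-2 extension of the values on the generators
    (φt : Fsl2 →ₗ[ℂ] Polynomial ℂ)
    (hφt1 : φt 1 = 1)
    (hφtkP : φt kP = ((q : ℂ) ^ (-σ / 2)) • (1 : Polynomial ℂ))
    (hφtkM : φt kM = ((q : ℂ) ^ (σ / 2)) • (1 : Polynomial ℂ))
    (hφteP : φt eP = (-(q : ℂ) ^ (-σ / 2) * qnum q σ) • (X : Polynomial ℂ))
    (hφteM : φt eM = 0)
    (hφtmul : ∀ x y : Fsl2,
      φt (x * y) = swF Δsl2.toLinearMap (actOnF ρ.toLinearMap (φt y)) φt x) :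
    φt (kP * kM - 1) = 0 ∧
    φt (kM * kP - 1) = 0 ∧
    φt (kP * eP - (q : ℂ) • (eP * kP)) = 0 ∧
    φt (kP * eM - ((q : ℂ))⁻¹ • (eM * kP)) = 0 ∧
    φt (eP * eM - eM * eP -
      ((q : ℂ) - (q : ℂ)⁻¹)⁻¹ • (kP * kP - kM * kM)) = 0 ∧
    φt (eP * kM - (q : ℂ) • (kM * eP)) = 0 ∧
    φt (eM * kM - ((q : ℂ))⁻¹ • (kM * eM)) = 0 := by
  -- scalar facts
  have hq0 : (q : ℂ) ≠ 0 := by exact_mod_cast hq.ne'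
  have hqq : (q : ℂ) * (q : ℂ)⁻¹ = 1 := mul_inv_cancel₀ hq0
  have hd : (q : ℂ) - (q : ℂ)⁻¹ ≠ 0 := by
    have hR : q - q⁻¹ ≠ 0 := by
      intro h
      have hq2 : q * q = 1 := by
        field_simp at h
        linarith [h]
      have : q = 1 := by nlinarith
      exact hq1 this
    intro h
    apply hR
    have : ((q - q⁻¹ : ℝ) : ℂ) = 0 := by push_cast; exact h
    exact_mod_cast this
  have hab : (q : ℂ) ^ (-σ / 2) * (q : ℂ) ^ (σ / 2) = 1 := by
    rw [← Complex.cpow_add _ _ hq0]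
    have h2 : -σ / 2 + σ / 2 = 0 := by ring
    rw [h2, Complex.cpow_zero]
  have haa : (q : ℂ) ^ (-σ / 2) * (q : ℂ) ^ (-σ / 2) = (q : ℂ) ^ (-σ) := by
    rw [← Complex.cpow_add _ _ hq0]; ring_nf
  have hbb : (q : ℂ) ^ (σ / 2) * (q : ℂ) ^ (σ / 2) = (q : ℂ) ^ σ := by
    rw [← Complex.cpow_add _ _ hq0]; ring_nf
  have hqnum0 : qnum q 0 = 0 := by simp [qnum]
  have hqnum1 : qnum q 1 = 1 := by
    simp only [qnum, Complex.cpow_one, Complex.cpow_neg_one]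
    exact div_self hd
  -- action values
  have hK1 : ρ kP 1 = 1 := by
    have h := hρK 0
    rw [pow_zero, Nat.cast_zero, Complex.cpow_zero, one_smul] at h
    exact h
  have hM1 : ρ kM 1 = 1 := by
    have h := hρKinv 0
    rw [pow_zero, Nat.cast_zero, neg_zero, Complex.cpow_zero, one_smul] at h
    exact h
  have hE1 : ρ eP 1 = 0 := by
    have h := hρE 0
    rw [pow_zero, Nat.cast_zero, hqnum0, zero_smul] at h
    exact h
  have hKX : ρ kP X = (q : ℂ) • X := by
    have h := hρK 1
    rw [pow_one, Nat.cast_one, Complex.cpow_one] at h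
    exact h
  have hMX : ρ kM X = ((q : ℂ))⁻¹ • X := by
    have h := hρKinv 1
    rw [pow_one, Nat.cast_one, Complex.cpow_neg_one] at h
    exact h
  have hFX : ρ eM X = -1 := by
    have h := hρF 0
    rw [zero_add, pow_one, Nat.cast_zero, zero_add, hqnum1, pow_zero] at h
    rw [h, neg_smul, one_smul]
  -- comultiplication values
  have hΔkP : Δsl2 kP = kP ⊗ₜ[ℂ] kP := by
    rw [Δsl2, kP, FreeAlgebra.lift_ι_apply]; rfl
  have hΔkM : Δsl2 kM = kM ⊗ₜ[ℂ] kM := by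
    rw [Δsl2, kM, FreeAlgebra.lift_ι_apply]; rfl
  have hΔeP : Δsl2 eP = eP ⊗ₜ[ℂ] kM + kP ⊗ₜ[ℂ] eP := by
    rw [Δsl2, eP, FreeAlgebra.lift_ι_apply]; rfl
  have hΔeM : Δsl2 eM = eM ⊗ₜ[ℂ] kM + kP ⊗ₜ[ℂ] eM := by
    rw [Δsl2, eM, FreeAlgebra.lift_ι_apply]; rfl
  -- product rule for grouplike / skew-primitive generators
  have key1 : ∀ (x y a b : Fsl2), Δsl2 x = a ⊗ₜ[ℂ] b →
      φt (x * y) = ρ a (φt y) * φt b := by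
    intro x y a b h
    rw [hφtmul]
    simp only [swF, actOnF, LinearMap.coe_comp, Function.comp_apply,
      AlgHom.toLinearMap_apply, h, TensorProduct.map_tmul, LinearMap.mul'_apply]
    rfl
  have key2 : ∀ (x y a b c d : Fsl2), Δsl2 x = a ⊗ₜ[ℂ] b + c ⊗ₜ[ℂ] d →
      φt (x * y) = ρ a (φt y) * φt b + ρ c (φt y) * φt d := by
    intro x y a b c d h
    rw [hφtmul]
    simp only [swF, actOnF, LinearMap.coe_comp, Function.comp_apply,
      AlgHom.toLinearMap_apply, h, map_add, TensorProduct.map_tmul,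
      LinearMap.mul'_apply]
    rfl
  refine ⟨?_, ?_, ?_, ?_, ?_, ?_, ?_⟩
  · rw [map_sub, key1 kP kM kP kP hΔkP, hφtkM, map_smul, hK1, hφtkP, hφt1]
    simp only [smul_mul_assoc, mul_smul_comm, smul_smul, one_mul, mul_one]
    match_scalars
    linear_combination hab
  · rw [map_sub, key1 kM kP kM kM hΔkM, hφtkP, map_smul, hM1, hφtkM, hφt1]
    simp only [smul_mul_assoc, mul_smul_comm, smul_smul, one_mul, mul_one]
    match_scalars
    linear_combination hab
  · rw [map_sub, map_smul, key1 kP eP kP kP hΔkP,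
      key2 eP kP eP kM kP eP hΔeP, hφteP, hφtkP, hφtkM,
      map_smul, hKX, map_smul, hE1, map_smul, hK1]
    simp only [smul_zero, zero_mul, zero_add, smul_mul_assoc, mul_smul_comm,
      smul_smul, one_mul, mul_one]
    match_scalars
    ring
  · rw [map_sub, map_smul, key1 kP eM kP kP hΔkP,
      key2 eM kP eM kM kP eM hΔeM, hφteM, hφtkP, hφtkM]
    simp only [map_zero, zero_mul, map_smul, hρF0, smul_zero, mul_zero,
      add_zero, smul_zero, sub_zero]
  · rw [map_sub, map_sub, map_smul, map_sub,
      key2 eP eM eP kM kP eP hΔeP, key2 eM eP eM kM kP eM hΔeM,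
      key1 kP kP kP kP hΔkP, key1 kM kM kM kM hΔkM,
      hφteM, hφteP, hφtkP, hφtkM]
    simp only [map_zero, map_smul, hFX, hK1, hM1]
    simp only [smul_mul_assoc, mul_smul_comm, smul_smul, one_mul, mul_one,
      smul_zero, zero_mul, mul_zero, add_zero, zero_add, sub_neg_eq_add]
    match_scalars
    simp only [qnum]
    linear_combination (-(((q : ℂ) ^ σ - (q : ℂ) ^ (-σ)) /
        ((q : ℂ) - (q : ℂ)⁻¹))) * hab -
      ((q : ℂ) - (q : ℂ)⁻¹)⁻¹ * haa + ((q : ℂ) - (q : ℂ)⁻¹)⁻¹ * hbb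
  · rw [map_sub, map_smul, key2 eP kM eP kM kP eP hΔeP,
      key1 kM eP kM kM hΔkM, hφteP, hφtkM,
      map_smul, hE1, map_smul, hK1, map_smul, hMX]
    simp only [smul_zero, zero_mul, zero_add, smul_mul_assoc, mul_smul_comm,
      smul_smul, one_mul, mul_one]
    match_scalars
    linear_combination ((q : ℂ) ^ (σ / 2) * ((q : ℂ) ^ (-σ / 2) * qnum q σ)) * hqq
  · rw [map_sub, map_smul, key2 eM kM eM kM kP eM hΔeM,
      key1 kM eM kM kM hΔkM, hφteM, hφtkM,
      map_smul, hρF0, map_smul, hK1, map_zero]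
    simp only [smul_zero, zero_mul, mul_zero, add_zero, zero_sub, smul_zero,
      neg_zero, sub_zero, sub_self]
end

section
/- In the twisted adjoint action example (rank one), for any λ ∈ ℂ the map φ given on generators by φ(e) = (1 − q^{2λ}) e, φ(f) = 0, φ(t) = q^{λ}·1 satisfies the compatibility condition φ(xy) = (ξ_{x₍₁₎}·φ(y))·φ(x₍₂₎) on the defining relations of Uq(sl2), and hence yields a modified left Uq(sl2)-module structure on ℂ[e] via x·g := (ξ_{x₍₁₎}·g)·φ(x₍₂₎). -/
/-!
On `ℂ[e] = ℂ[X]`, `ξ(t)` is the dilation `g(X) ↦ g(q²X)`, `ξ(t⁻¹)` its inverse,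
`ξ(e) g = (g - ξ(t) g) X`, and `ξ(f)` is the `q`-difference operator, characterised by
`ξ(f) g · X = κ (g - ξ(t⁻¹) g)` and `ξ(f) (g X) = κ (g - q⁻² ξ(t⁻¹) g)` with
`κ (1 - q⁻²) = (q - q⁻¹)⁻¹`. The weight enters only through `u = q^λ`, with `q^{2λ} = u²`, so
the modified `e` is `g ↦ (g - u² ξ(t) g) X`. Pushing every factor `X` through `ξ(t)` and `ξ(f)`
with these rules turns each defining relation of `U_q(sl₂)` into a linear identity between
`g`, `ξ(t) g` and `ξ(t⁻¹) g`.
-/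

open Polynomial

namespace Polynomial

theorem linearMap_ext_X_pow {R M : Type*} [Semiring R] [AddCommMonoid M] [Module R M]
    {f g : R[X] →ₗ[R] M} (h : ∀ n : ℕ, f (X ^ n) = g (X ^ n)) : f = g :=
  (basisMonomials R).ext fun n => by simpa [monomial_one_right_eq_X_pow] using h n

end Polynomial

section

variable {K : Type*} [Field K] {q : K}

theorem comp_eq_id_of_apply_X_pow {S T : Module.End K K[X]} {a : ℕ → K} (ha : ∀ n, a n ≠ 0)
    (hS : ∀ n : ℕ, S (X ^ n) = a n • X ^ n) (hT : ∀ n : ℕ, T (X ^ n) = (a n)⁻¹ • X ^ n) :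
    S ∘ₗ T = LinearMap.id :=
  linearMap_ext_X_pow fun n => by simp [hS, hT, smul_smul, ha]

theorem dilation_apply_mul_X {T : Module.End K K[X]}
    (hT : ∀ n : ℕ, T (X ^ n) = q ^ (2 * n) • X ^ n) (g : K[X]) :
    T (g * X) = q ^ 2 • (T g * X) := by
  have : T ∘ₗ LinearMap.mulRight K X = q ^ 2 • (LinearMap.mulRight K X ∘ₗ T) :=
    linearMap_ext_X_pow fun n => by
      simp only [LinearMap.comp_apply, LinearMap.smul_apply, LinearMap.mulRight_apply,
        ← pow_succ, hT, smul_mul_assoc, smul_smul, ← pow_add]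
      ring_nf
  exact LinearMap.congr_fun this g

theorem apply_eq_sub_dilation_mul_X {E T : Module.End K K[X]}
    (hE : ∀ n : ℕ, E (X ^ n) = (1 - q ^ (2 * n)) • X ^ (n + 1))
    (hT : ∀ n : ℕ, T (X ^ n) = q ^ (2 * n) • X ^ n) (g : K[X]) :
    E g = (g - T g) * X := by
  have : E = LinearMap.mulRight K X ∘ₗ (LinearMap.id - T) :=
    linearMap_ext_X_pow fun n => by simp [hE, hT, pow_succ, sub_smul, sub_mul]
  exact LinearMap.congr_fun this g

theorem qDifference_mul_X {F Tinv : Module.End K K[X]}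
    (hTinv : ∀ n : ℕ, Tinv (X ^ n) = (q ^ (2 * n))⁻¹ • X ^ n) (hF0 : F 1 = 0)
    (hF : ∀ n : ℕ, F (X ^ (n + 1)) =
      ((q - q⁻¹)⁻¹ * ((1 - (q ^ (2 * (n + 1)))⁻¹) / (1 - (q ^ 2)⁻¹))) • X ^ n) (g : K[X]) :
    F g * X = ((q - q⁻¹)⁻¹ / (1 - (q ^ 2)⁻¹)) • (g - Tinv g) := by
  have : LinearMap.mulRight K X ∘ₗ F = ((q - q⁻¹)⁻¹ / (1 - (q ^ 2)⁻¹)) • (LinearMap.id - Tinv) :=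
    linearMap_ext_X_pow fun n => by
      rcases n with _ | n
      · simp [hF0, show Tinv 1 = 1 by simpa using hTinv 0]
      · simp only [LinearMap.comp_apply, LinearMap.smul_apply, LinearMap.sub_apply,
          LinearMap.id_apply, LinearMap.mulRight_apply, hF, hTinv, smul_mul_assoc, ← pow_succ]
        module
  exact LinearMap.congr_fun this g

theorem qDifference_apply_mul_X {F Tinv : Module.End K K[X]}
    (hTinv : ∀ n : ℕ, Tinv (X ^ n) = (q ^ (2 * n))⁻¹ • X ^ n)
    (hF : ∀ n : ℕ, F (X ^ (n + 1)) =
      ((q - q⁻¹)⁻¹ * ((1 - (q ^ (2 * (n + 1)))⁻¹) / (1 - (q ^ 2)⁻¹))) • X ^ n) (g : K[X]) :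
    F (g * X) = ((q - q⁻¹)⁻¹ / (1 - (q ^ 2)⁻¹)) • (g - (q ^ 2)⁻¹ • Tinv g) := by
  have : F ∘ₗ LinearMap.mulRight K X =
      ((q - q⁻¹)⁻¹ / (1 - (q ^ 2)⁻¹)) • (LinearMap.id - (q ^ 2)⁻¹ • Tinv) :=
    linearMap_ext_X_pow fun n => by
      simp only [LinearMap.comp_apply, LinearMap.smul_apply, LinearMap.sub_apply,
        LinearMap.id_apply, LinearMap.mulRight_apply, ← pow_succ, hF, hTinv, smul_smul]
      rw [mul_add, mul_one, pow_add, mul_inv]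
      module
  exact LinearMap.congr_fun this g

theorem dilation_comp_lowering {T F : Module.End K K[X]} {c : ℕ → K} (hq : q ≠ 0)
    (hT : ∀ n : ℕ, T (X ^ n) = q ^ (2 * n) • X ^ n) (hF0 : F 1 = 0)
    (hF : ∀ n : ℕ, F (X ^ (n + 1)) = c n • X ^ n) :
    T ∘ₗ F = (q ^ 2)⁻¹ • (F ∘ₗ T) :=
  linearMap_ext_X_pow fun n => by
    rcases n with _ | n
    · simp [hF0, show T 1 = 1 by simpa using hT 0]
    · simp only [LinearMap.comp_apply, LinearMap.smul_apply, hF, hT, map_smul, smul_smul]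
      rw [mul_add, mul_one, pow_add]
      field_simp

end

/-- `Te, Tinv, Ee, Fe` are `ξ(t), ξ(t⁻¹), ξ(e), ξ(f)` on `ℂ[e] = ℂ[X]`; the modified action is
`t·g = q^λ ξ_t(g)`, `e·g = ξ_e(g) + (1-q^{2λ}) ξ_t(g)·e`, `f·g = q^{-λ} ξ_f(g)`. -/
theorem twisted_adjoint_modified_action (q : ℝ) (hq : 0 < q) (hq1 : q ≠ 1) (lam : ℂ)
    (Te Tinv Ee Fe : Module.End ℂ (Polynomial ℂ))
    (hTe : ∀ n : ℕ, Te (X ^ n) = ((q : ℂ) ^ (2 * n)) • X ^ n)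
    (hTinv : ∀ n : ℕ, Tinv (X ^ n) = (((q : ℂ) ^ (2 * n))⁻¹) • X ^ n)
    (hEe : ∀ n : ℕ, Ee (X ^ n) = (1 - (q : ℂ) ^ (2 * n)) • X ^ (n + 1))
    (hFe0 : Fe 1 = 0)
    (hFe : ∀ n : ℕ, Fe (X ^ (n + 1)) =
      (((q : ℂ) - (q : ℂ)⁻¹)⁻¹ *
        ((1 - ((q : ℂ) ^ (2 * (n + 1)))⁻¹) / (1 - ((q : ℂ) ^ 2)⁻¹))) • X ^ n) :
    -- the modified operators
    (((q : ℂ) ^ lam • Te) ∘ₗ (((q : ℂ) ^ lam)⁻¹ • Tinv) = LinearMap.id) ∧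
    ((((q : ℂ) ^ lam)⁻¹ • Tinv) ∘ₗ ((q : ℂ) ^ lam • Te) = LinearMap.id) ∧
    (((q : ℂ) ^ lam • Te) ∘ₗ
        (Ee + (1 - (q : ℂ) ^ (2 * lam)) • (LinearMap.mulRight ℂ (X : Polynomial ℂ) ∘ₗ Te)) =
      ((q : ℂ) ^ 2) •
        ((Ee + (1 - (q : ℂ) ^ (2 * lam)) • (LinearMap.mulRight ℂ (X : Polynomial ℂ) ∘ₗ Te)) ∘ₗ
          ((q : ℂ) ^ lam • Te))) ∧
    (((q : ℂ) ^ lam • Te) ∘ₗ (((q : ℂ) ^ lam)⁻¹ • Fe) =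
      (((q : ℂ) ^ 2)⁻¹) • ((((q : ℂ) ^ lam)⁻¹ • Fe) ∘ₗ ((q : ℂ) ^ lam • Te))) ∧
    ((Ee + (1 - (q : ℂ) ^ (2 * lam)) • (LinearMap.mulRight ℂ (X : Polynomial ℂ) ∘ₗ Te)) ∘ₗ
        (((q : ℂ) ^ lam)⁻¹ • Fe) -
      (((q : ℂ) ^ lam)⁻¹ • Fe) ∘ₗ
        (Ee + (1 - (q : ℂ) ^ (2 * lam)) • (LinearMap.mulRight ℂ (X : Polynomial ℂ) ∘ₗ Te)) =
      ((q : ℂ) - (q : ℂ)⁻¹)⁻¹ •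
        (((q : ℂ) ^ lam • Te) - (((q : ℂ) ^ lam)⁻¹ • Tinv))) := by
  have hq0 : (q : ℂ) ≠ 0 := Complex.ofReal_ne_zero.mpr hq.ne'
  have hq2 : (q : ℂ) ^ 2 ≠ 1 := by
    exact_mod_cast (pow_eq_one_iff_of_nonneg hq.le two_ne_zero).not.mpr hq1
  have hu : (q : ℂ) ^ lam ≠ 0 := by simp [hq0]
  rw [two_mul lam, Complex.cpow_add _ _ hq0]
  set u := (q : ℂ) ^ lam
  set κ := ((q : ℂ) - (q : ℂ)⁻¹)⁻¹ / (1 - ((q : ℂ) ^ 2)⁻¹)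
  have hκ : κ * (1 - ((q : ℂ) ^ 2)⁻¹) = ((q : ℂ) - (q : ℂ)⁻¹)⁻¹ :=
    div_mul_cancel₀ _ (sub_ne_zero.mpr (by simpa [eq_comm] using hq2))
  have hTTinv (g : ℂ[X]) : Te (Tinv g) = g := LinearMap.congr_fun
    (comp_eq_id_of_apply_X_pow (fun n => pow_ne_zero (2 * n) hq0) hTe hTinv) g
  have hTinvT (g : ℂ[X]) : Tinv (Te g) = g := LinearMap.congr_fun
    (comp_eq_id_of_apply_X_pow (fun n => inv_ne_zero (pow_ne_zero (2 * n) hq0)) hTinv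
      (by simpa only [inv_inv] using hTe)) g
  have hTF (g : ℂ[X]) : Te (Fe g) = ((q : ℂ) ^ 2)⁻¹ • Fe (Te g) :=
    LinearMap.congr_fun (dilation_comp_lowering hq0 hTe hFe0 hFe) g
  refine ⟨?_, ?_, ?_, ?_, ?_⟩ <;> refine LinearMap.ext fun g => ?_ <;>
    simp only [LinearMap.comp_apply, LinearMap.smul_apply, LinearMap.add_apply,
      LinearMap.sub_apply, LinearMap.id_apply, LinearMap.mulRight_apply, map_smul, map_add,
      map_sub, apply_eq_sub_dilation_mul_X hEe hTe, dilation_apply_mul_X hTe, hTTinv, hTinvT, hTF,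
      sub_mul, smul_mul_assoc, qDifference_mul_X hTinv hFe0 hFe, qDifference_apply_mul_X hTinv hFe]
  · linear_combination (norm := module) inv_mul_cancel₀ hu • g
  · linear_combination (norm := module) mul_inv_cancel₀ hu • g
  · module
  · module
  · linear_combination (norm := module) hκ • ((u * u * u⁻¹) • Te g - u⁻¹ • Tinv g) +
      mul_inv_cancel₀ hu • ((u * ((q : ℂ) - (q : ℂ)⁻¹)⁻¹) • Te g)
end
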